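/- Let n be a positive integer, and define P₀ = 0, P₁ = 1, P_{M+2} = 2n·P_{M+1} + P_M. Then for every m ≥ 1, Q(P_{2m}; P_{2m+1}) = 0 and Q(P_{2m}; P_{2m−1}) = 0, where Q(a;b) := 6·(s(a;2b) + s(2a;b) − 2·s(a;b)) and s is the classical Dedekind sum. -/

import Mathlib

/-!
The sum `s(a;b)` depends only on `a` modulo `b`, is odd in `a`, and is unchanged when `a` is
replaced by its inverse modulo `b` (substitute `ν ↦ a ν`); the duplication formula
`cot x + cot (x + π/2) = 2 cot 2x` gives `s(2a;2b) = s(a;b)`. If `a = 2c` and `a² ≡ -1 (mod b)`,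
then `a⁻¹ ≡ -a` forces `s(a;b) = 0`, and `(2a)⁻¹ ≡ -c` gives `s(2a;b) = -s(c;b) = -s(a;2b)`,
so `Q(a;b) = 0`. For the Pell-type sequence, Cassini's identity says
`P_{2m+1} P_{2m-1} - P_{2m}² = 1`, so `P_{2m}² ≡ -1` modulo both `P_{2m±1}`, and `P_{2m}` is even.
-/

open Finset Real

/-- The classical Dedekind sum `s(a;b)` defined by the cotangent sum. -/
noncomputable def dedekindS (a : ℤ) (b : ℕ) : ℝ :=
  (1 / (4 * (b : ℝ))) * ∑ ν ∈ Finset.Ico 1 b,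
    Real.cot (Real.pi * a * ν / b) * Real.cot (Real.pi * ν / b)

/-- The rational part `Q(a;b)` of the elliptic classical Dedekind sum. -/
noncomputable def Qpart (a b : ℕ) : ℝ :=
  6 * (dedekindS a (2 * b) + dedekindS (2 * a) b - 2 * dedekindS a b)

namespace Real

lemma cot_neg (x : ℝ) : cot (-x) = -cot x := by
  simp [cot_eq_cos_div_sin, div_neg]

lemma cot_periodic : Function.Periodic cot π := by
  intro x
  simp [cot_eq_cos_div_sin, cos_add_pi, sin_add_pi, neg_div_neg_eq]

-- Holds for every `x`, poles included, since Lean's `cot` is `0` wherever `sin` vanishes.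
lemma cot_add_cot_add_pi_div_two (x : ℝ) : cot x + cot (x + π / 2) = 2 * cot (2 * x) := by
  simp only [cot_eq_cos_div_sin, cos_add_pi_div_two, sin_add_pi_div_two, sin_two_mul,
    cos_two_mul']
  rcases eq_or_ne (sin x) 0 with hs | hs
  · simp [hs]
  rcases eq_or_ne (cos x) 0 with hc | hc
  · simp [hc]
  field_simp
  ring

end Real

lemma ZMod.sum_range_natCast {M : Type*} [AddCommMonoid M] (b : ℕ) [NeZero b]
    (f : ZMod b → M) : ∑ ν ∈ range b, f ν = ∑ x : ZMod b, f x :=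
  sum_nbij' Nat.cast ZMod.val (fun _ _ ↦ mem_univ _) (fun x _ ↦ mem_range.mpr x.val_lt)
    (fun _ hν ↦ ZMod.val_cast_of_lt (mem_range.mp hν)) (fun x _ ↦ ZMod.natCast_zmod_val x)
    (fun _ _ ↦ rfl)

noncomputable def cotMod (b : ℕ) (x : ZMod b) : ℝ := cot (π * x.val / b)

lemma cotMod_intCast (b : ℕ) [NeZero b] (k : ℤ) : cotMod b k = cot (π * k / b) := by
  have hb : (b : ℝ) ≠ 0 := Nat.cast_ne_zero.mpr (NeZero.ne b)
  have hval : (((k : ZMod b).val : ℕ) : ℝ) = ((k % b : ℤ) : ℝ) := by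
    exact_mod_cast ZMod.val_intCast k
  have hk : π * k / b = π * ((k % b : ℤ) : ℝ) / b + (k / b : ℤ) * π := by
    conv_lhs => rw [← Int.emod_add_mul_ediv k b]
    push_cast
    field_simp
  rw [cotMod, hval, hk, cot_periodic.int_mul]

lemma cotMod_neg (b : ℕ) [NeZero b] (x : ZMod b) : cotMod b (-x) = -cotMod b x := by
  obtain ⟨k, rfl⟩ := ZMod.intCast_surjective x
  rw [← Int.cast_neg, cotMod_intCast, cotMod_intCast, Int.cast_neg, mul_neg, neg_div, cot_neg]

-- The added term `ν = 0` is `cot 0 * cot 0 = 0` with Lean's convention `cot 0 = 0`.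
lemma dedekindS_eq_sum_range (a : ℤ) (b : ℕ) :
    dedekindS a b = 1 / (4 * b) * ∑ ν ∈ range b, cot (π * a * ν / b) * cot (π * ν / b) := by
  rcases Nat.eq_zero_or_pos b with rfl | hb
  · simp [dedekindS]
  rw [dedekindS, range_eq_Ico, sum_eq_sum_Ico_succ_bot hb]
  simp [cot_eq_cos_div_sin]

lemma dedekindS_eq_sum_cotMod (a : ℤ) (b : ℕ) [NeZero b] :
    dedekindS a b = 1 / (4 * b) * ∑ x : ZMod b, cotMod b (a * x) * cotMod b x := by
  rw [dedekindS_eq_sum_range, ← ZMod.sum_range_natCast]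
  congr 1
  refine sum_congr rfl fun ν _ ↦ ?_
  rw [← Int.cast_natCast (R := ZMod b), ← Int.cast_mul, cotMod_intCast, cotMod_intCast]
  push_cast
  ring_nf

lemma dedekindS_neg (a : ℤ) (b : ℕ) : dedekindS (-a) b = -dedekindS a b := by
  rcases eq_zero_or_neZero b with rfl | _
  · simp [dedekindS]
  simp only [dedekindS_eq_sum_cotMod, Int.cast_neg, neg_mul, cotMod_neg, sum_neg_distrib,
    mul_neg]

lemma dedekindS_eq_of_mul_modEq_one {a a' : ℤ} {b : ℕ} (h : a * a' ≡ 1 [ZMOD b]) :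
    dedekindS a b = dedekindS a' b := by
  rcases eq_zero_or_neZero b with rfl | _
  · simp [dedekindS]
  have h' : (a : ZMod b) * a' = 1 := by
    exact_mod_cast (ZMod.intCast_eq_intCast_iff _ _ _).mpr h
  let u : (ZMod b)ˣ := ⟨a, a', h', by rwa [mul_comm]⟩
  rw [dedekindS_eq_sum_cotMod, dedekindS_eq_sum_cotMod]
  refine congrArg _ (Fintype.sum_equiv (Units.mulLeft u) _ _ fun x ↦ ?_)
  change _ = cotMod b (a' * (a * x)) * cotMod b (a * x)
  rw [← mul_assoc, mul_comm (a' : ZMod b), h', one_mul, mul_comm]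

lemma dedekindS_two_mul_two_mul (a : ℤ) (b : ℕ) : dedekindS (2 * a) (2 * b) = dedekindS a b := by
  rcases Nat.eq_zero_or_pos b with rfl | hb
  · simp [dedekindS]
  have hb' : (b : ℝ) ≠ 0 := by positivity
  have key : ∀ μ : ℕ,
      cot (π * (2 * a) * μ / (2 * b)) * cot (π * μ / (2 * b)) +
        cot (π * (2 * a) * ((b : ℝ) + μ) / (2 * b)) * cot (π * ((b : ℝ) + μ) / (2 * b)) =
      2 * (cot (π * a * μ / b) * cot (π * μ / b)) := by
    intro μ
    have h1 : π * (2 * a) * μ / (2 * b) = π * a * μ / b := by field_simp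
    have h2 : π * (2 * a) * ((b : ℝ) + μ) / (2 * b) = π * a * μ / b + a * π := by
      field_simp; ring
    have h3 : π * ((b : ℝ) + μ) / (2 * b) = π * μ / (2 * b) + π / 2 := by
      field_simp; ring
    have h4 : π * μ / b = 2 * (π * μ / (2 * b)) := by field_simp
    rw [h1, h2, h3, h4, cot_periodic.int_mul a, mul_left_comm, ← cot_add_cot_add_pi_div_two]
    ring
  rw [dedekindS_eq_sum_range, dedekindS_eq_sum_range, show range (2 * b) = range (b + b) by
    rw [two_mul], sum_range_add, ← sum_add_distrib]
  push_cast
  simp only [key, ← mul_sum]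
  field_simp

lemma dedekindS_eq_zero_of_sq_modEq_neg_one {a : ℤ} {b : ℕ} (h : a ^ 2 ≡ -1 [ZMOD b]) :
    dedekindS a b = 0 := by
  have hinv : a * -a ≡ 1 [ZMOD b] := by
    convert h.neg using 1 <;> ring
  have := (dedekindS_eq_of_mul_modEq_one hinv).trans (dedekindS_neg a b)
  linarith

lemma dedekindS_two_mul_of_sq_modEq_neg_one {a c : ℤ} {b : ℕ} (h : a ^ 2 ≡ -1 [ZMOD b])
    (hc : 2 * c ≡ a [ZMOD b]) : dedekindS (2 * a) b = -dedekindS c b := by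
  have hinv : 2 * a * -c ≡ 1 [ZMOD b] := by
    have h' : a * a ≡ -1 [ZMOD b] := by rwa [← sq]
    convert ((hc.mul_left a).trans h').neg using 1 <;> ring
  rw [dedekindS_eq_of_mul_modEq_one hinv, dedekindS_neg]

theorem Qpart_eq_zero_of_sq_modEq_neg_one {a b : ℕ} (ha : Even a)
    (h : (a : ℤ) ^ 2 ≡ -1 [ZMOD b]) : Qpart a b = 0 := by
  obtain ⟨c, rfl⟩ := ha
  rw [← two_mul] at h ⊢
  push_cast at h
  rw [Qpart]
  push_cast
  rw [dedekindS_two_mul_two_mul, dedekindS_two_mul_of_sq_modEq_neg_one h (.refl _),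
    dedekindS_eq_zero_of_sq_modEq_neg_one h]
  ring

section Pell

variable {n : ℕ} {P : ℕ → ℕ} (h0 : P 0 = 0) (h1 : P 1 = 1)
  (hrec : ∀ M, P (M + 2) = 2 * n * P (M + 1) + P M)
include h0 h1 hrec

lemma pell_cassini (M : ℕ) : (P (M + 2) * P M : ℤ) - P (M + 1) ^ 2 = (-1) ^ (M + 1) := by
  induction M with
  | zero => simp [h0, h1]
  | succ M ih =>
    have e1 : (P (M + 2) : ℤ) = 2 * n * P (M + 1) + P M := by exact_mod_cast hrec M
    have e2 : (P (M + 3) : ℤ) = 2 * n * P (M + 2) + P (M + 1) := by exact_mod_cast hrec (M + 1)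
    linear_combination (P (M + 1) : ℤ) * e2 - ih - (P (M + 2) : ℤ) * e1

lemma pell_sq_modEq_neg_one (k : ℕ) :
    (P (2 * k + 2) : ℤ) ^ 2 ≡ -1 [ZMOD P (2 * k + 1)] ∧
      (P (2 * k + 2) : ℤ) ^ 2 ≡ -1 [ZMOD P (2 * k + 3)] := by
  have h : (P (2 * k + 3) * P (2 * k + 1) : ℤ) - P (2 * k + 2) ^ 2 = 1 := by
    have h := pell_cassini h0 h1 hrec (2 * k + 1)
    rwa [Even.neg_one_pow ⟨k + 1, by ring⟩] at h
  exact ⟨Int.modEq_iff_dvd.mpr ⟨-P (2 * k + 3), by linear_combination h⟩,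
    Int.modEq_iff_dvd.mpr ⟨-P (2 * k + 1), by linear_combination h⟩⟩

lemma pell_mod_two (M : ℕ) : P M % 2 = M % 2 := by
  induction M using Nat.twoStepInduction with
  | zero => simp [h0]
  | one => simp [h1]
  | more M ih _ => rw [hrec, mul_assoc]; omega

end Pell

theorem Qpart_gen_pell_zero (n : ℕ) (P : ℕ → ℕ) (h0 : P 0 = 0) (h1 : P 1 = 1)
    (hrec : ∀ M, P (M + 2) = 2 * n * P (M + 1) + P M) :
    ∀ m, 1 ≤ m → Qpart (P (2 * m)) (P (2 * m + 1)) = 0 ∧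
      Qpart (P (2 * m)) (P (2 * m - 1)) = 0 := by
  intro m hm
  obtain ⟨k, rfl⟩ : ∃ k, m = k + 1 := ⟨m - 1, by omega⟩
  rw [show 2 * (k + 1) = 2 * k + 2 by ring, show 2 * k + 2 - 1 = 2 * k + 1 by omega]
  have heven : Even (P (2 * k + 2)) := Nat.even_iff.mpr (by rw [pell_mod_two h0 h1 hrec]; omega)
  obtain ⟨hminus, hplus⟩ := pell_sq_modEq_neg_one h0 h1 hrec k
  exact ⟨Qpart_eq_zero_of_sq_modEq_neg_one heven hplus,
    Qpart_eq_zero_of_sq_modEq_neg_one heven hminus⟩
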